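/- The eigenspace of the operator Y for the eigenvalue 7 is the 3-dimensional space of antisymmetric matrices spanned by A₁ = E^{03} − E^{30} − 3E^{12} + 3E^{21}, A₂ = E^{04} − E^{40} − 2E^{13} + 2E^{31}, and A₃ = E^{14} − E^{41} − 3E^{23} + 3E^{32}, where E^{ij} denotes the 5×5 matrix unit with 1 in entry (i,j) and 0 elsewhere. (These correspond to the 2-forms θ⁰∧θ³ − 3θ¹∧θ², θ⁰∧θ⁴ − 2θ¹∧θ³, θ¹∧θ⁴ − 3θ²∧θ³ spanning the representation Λ₃.) -/

import Mathlib

/-- The inverse metric `g^{ij}`. -/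
noncomputable def ginv : Matrix (Fin 5) (Fin 5) ℝ :=
  !![0, 0, 0, 0, 2;
     0, 0, 0, -1/2, 0;
     0, 0, 1/3, 0, 0;
     0, -1/2, 0, 0, 0;
     2, 0, 0, 0, 0]

/-- The totally symmetric tensor `Υ_{ijk}`. -/
noncomputable def Ups (i j k : Fin 5) : ℝ :=
  if ({i, j, k} : Multiset (Fin 5)) = {0, 2, 4} then Real.sqrt 3 / 2
  else if ({i, j, k} : Multiset (Fin 5)) = {1, 2, 3} then Real.sqrt 3
  else if ({i, j, k} : Multiset (Fin 5)) = {2, 2, 2} then -3 * Real.sqrt 3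
  else if ({i, j, k} : Multiset (Fin 5)) = {0, 3, 3} then -Real.sqrt 3
  else if ({i, j, k} : Multiset (Fin 5)) = {1, 1, 4} then -Real.sqrt 3
  else 0

/-- The operator `Y(w)_{ik} = 4 g^{ab} Υ_{ija} Υ_{klb} g^{mj} g^{pl} w_{mp}` on `5×5` matrices. -/
noncomputable def Yop : Matrix (Fin 5) (Fin 5) ℝ →ₗ[ℝ] Matrix (Fin 5) (Fin 5) ℝ where
  toFun w := Matrix.of fun i k =>
    4 * ∑ j : Fin 5, ∑ l : Fin 5, ∑ a : Fin 5, ∑ b : Fin 5, ∑ m : Fin 5, ∑ p : Fin 5,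
        ginv a b * Ups i j a * Ups k l b * ginv m j * ginv p l * w m p
  map_add' w₁ w₂ := by
    funext i k
    simp only [Matrix.of_apply, Matrix.add_apply, mul_add, Finset.sum_add_distrib]
  map_smul' c w := by
    funext i k
    simp only [Matrix.of_apply, Matrix.smul_apply, smul_eq_mul, RingHom.id_apply,
      Finset.mul_sum]
    congr 1
    ext j; congr 1
    ext l; congr 1
    ext a; congr 1
    ext b; congr 1
    ext m; congr 1
    ext p
    ring

/-- `A₁ = E⁰³ − E³⁰ − 3E¹² + 3E²¹`, corresponding to the 2-form `θ⁰∧θ³ − 3θ¹∧θ²`. -/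
noncomputable def A1 : Matrix (Fin 5) (Fin 5) ℝ :=
  Matrix.single 0 3 1 - Matrix.single 3 0 1
    - (3 : ℝ) • Matrix.single 1 2 1 + (3 : ℝ) • Matrix.single 2 1 1

/-- `A₂ = E⁰⁴ − E⁴⁰ − 2E¹³ + 2E³¹`, corresponding to the 2-form `θ⁰∧θ⁴ − 2θ¹∧θ³`. -/
noncomputable def A2 : Matrix (Fin 5) (Fin 5) ℝ :=
  Matrix.single 0 4 1 - Matrix.single 4 0 1
    - (2 : ℝ) • Matrix.single 1 3 1 + (2 : ℝ) • Matrix.single 3 1 1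

/-- `A₃ = E¹⁴ − E⁴¹ − 3E²³ + 3E³²`, corresponding to the 2-form `θ¹∧θ⁴ − 3θ²∧θ³`. -/
noncomputable def A3 : Matrix (Fin 5) (Fin 5) ℝ :=
  Matrix.single 1 4 1 - Matrix.single 4 1 1
    - (3 : ℝ) • Matrix.single 2 3 1 + (3 : ℝ) • Matrix.single 3 2 1

/-!
Everything is homogeneous for the grading `deg θᵢ = i`: `Υ_{ijk} ≠ 0` only if `i + j + k = 6`,
and `g^{ij} ≠ 0` only if `i + j = 4`. Hence `Y` sends the entry `w_{mp}` only to entries `(i, k)`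
with `i + k = m + p`, and once `Y` is computed explicitly the equation `Y w = 7 w` splits into
small linear systems, one for each weight `i + k`. Only the systems of weight 3, 4 and 5 have
nonzero solutions, spanned by `A₁`, `A₂` and `A₃` respectively.
-/

open Finset

noncomputable def ginvAntidiag : Fin 5 → ℝ := ![2, -1/2, 1/3, -1/2, 2]

lemma ginvAntidiag_rev (i : Fin 5) : ginvAntidiag i.rev = ginvAntidiag i := by
  fin_cases i <;> rfl

lemma ginv_apply (i j : Fin 5) : ginv i j = if i = j.rev then ginvAntidiag j else 0 := by
  fin_cases i <;> fin_cases j <;> simp [ginv, ginvAntidiag]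

lemma Ups_eq_zero_of_add_ne {i j k : Fin 5} (h : (i : ℕ) + j + k ≠ 6) : Ups i j k = 0 := by
  have not_eq_of_sum : ∀ s : Multiset (Fin 5), ({i, j, k} : Multiset (Fin 5)) = s →
      (s.map Fin.val).sum = 6 → False := by
    rintro s rfl hs
    simp only [Multiset.insert_eq_cons, Multiset.map_cons, Multiset.map_singleton,
      Multiset.sum_cons, Multiset.sum_singleton] at hs
    omega
  unfold Ups
  split_ifs with h₁ h₂ h₃ h₄ h₅
  exacts [(not_eq_of_sum _ h₁ rfl).elim, (not_eq_of_sum _ h₂ rfl).elim,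
    (not_eq_of_sum _ h₃ rfl).elim, (not_eq_of_sum _ h₄ rfl).elim, (not_eq_of_sum _ h₅ rfl).elim, rfl]

lemma Yop_apply_apply (w : Matrix (Fin 5) (Fin 5) ℝ) (i k : Fin 5) :
    Yop w i k = 4 * ∑ j, ∑ l, ∑ a, ginvAntidiag a * Ups i j a * Ups k l a.rev *
      ginvAntidiag j * ginvAntidiag l * w j.rev l.rev := by
  simp only [Yop, LinearMap.coe_mk, AddHom.coe_mk, Matrix.of_apply, ginv_apply, mul_ite, ite_mul,
    mul_zero, zero_mul, sum_ite_eq', mem_univ, if_true]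
  simp only [← Fin.rev_eq_iff, sum_ite_eq, mem_univ, if_true, ginvAntidiag_rev]

set_option maxHeartbeats 400000 in
lemma Yop_apply (w : Matrix (Fin 5) (Fin 5) ℝ) : Yop w = !![
    4 * w 0 0, -2 * w 0 1 + 6 * w 1 0, -4 * w 0 2 + 3/2 * w 1 1 + 4 * w 2 0,
      -2 * w 0 3 - w 1 2 + 2 * w 2 1, 4 * w 0 4 - 3/2 * w 1 3 + 2/3 * w 2 2;
    6 * w 0 1 - 2 * w 1 0, 4 * w 0 2 + w 1 1 + 4 * w 2 0,
      -6 * w 0 3 + 2 * w 1 2 + w 2 1 + 12 * w 3 0,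
      -24 * w 0 4 + w 1 3 - 2/3 * w 2 2 + 6 * w 3 1, -2 * w 1 4 - w 2 3 + 2 * w 3 2;
    4 * w 0 2 + 3/2 * w 1 1 - 4 * w 2 0, 12 * w 0 3 + w 1 2 + 2 * w 2 1 - 6 * w 3 0,
      24 * w 0 4 - 3/2 * w 1 3 + 4 * w 2 2 - 3/2 * w 3 1 + 24 * w 4 0,
      -6 * w 1 4 + 2 * w 2 3 + w 3 2 + 12 * w 4 1, -4 * w 2 4 + 3/2 * w 3 3 + 4 * w 4 2;
    2 * w 1 2 - w 2 1 - 2 * w 3 0, 6 * w 1 3 - 2/3 * w 2 2 + w 3 1 - 24 * w 4 0,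
      12 * w 1 4 + w 2 3 + 2 * w 3 2 - 6 * w 4 1, 4 * w 2 4 + w 3 3 + 4 * w 4 2,
      -2 * w 3 4 + 6 * w 4 3;
    2/3 * w 2 2 - 3/2 * w 3 1 + 4 * w 4 0, 2 * w 2 3 - w 3 2 - 2 * w 4 1,
      4 * w 2 4 + 3/2 * w 3 3 - 4 * w 4 2, 6 * w 3 4 - 2 * w 4 3, 4 * w 4 4] := by
  have sqrt_three_sq : √3 ^ 2 = 3 := Real.sq_sqrt (by norm_num)
  ext i k
  rw [Yop_apply_apply]
  fin_cases i <;> fin_cases k <;>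
    simp (disch := decide) only [Fin.sum_univ_five, Ups_eq_zero_of_add_ne, zero_mul, mul_zero,
      add_zero, zero_add] <;>
    simp +decide [Ups, ginvAntidiag] <;> ring_nf <;> simp only [sqrt_three_sq] <;> ring

lemma smul_A1_add_smul_A2_add_smul_A3 (a b c : ℝ) :
    a • A1 + b • A2 + c • A3 =
      !![0, 0, 0, a, b; 0, 0, -3 * a, -2 * b, c; 0, 3 * a, 0, -3 * c, 0;
        -a, 2 * b, 3 * c, 0, 0; -b, -c, 0, 0, 0] := by
  ext i k
  fin_cases i <;> fin_cases k <;> simp [A1, A2, A3] <;> ring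

lemma Yop_smul_A1_add_smul_A2_add_smul_A3 (a b c : ℝ) :
    Yop (a • A1 + b • A2 + c • A3) = (7 : ℝ) • (a • A1 + b • A2 + c • A3) := by
  rw [smul_A1_add_smul_A2_add_smul_A3, Yop_apply]
  ext i k
  fin_cases i <;> fin_cases k <;> simp <;> ring

lemma eq_of_Yop_eq_smul {w : Matrix (Fin 5) (Fin 5) ℝ} (hw : Yop w = (7 : ℝ) • w) :
    w = w 0 3 • A1 + w 0 4 • A2 + w 1 4 • A3 := by
  rw [Yop_apply, ← Matrix.ext_iff] at hw
  simp only [Fin.isValue, neg_mul, Matrix.of_apply, Matrix.cons_val', Matrix.cons_val_fin_one,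
    Matrix.smul_apply, smul_eq_mul, Fin.forall_fin_succ, Matrix.cons_val_zero, Matrix.cons_val_succ,
    Fin.succ_zero_eq_one, Fin.succ_one_eq_two, Fin.reduceSucc, IsEmpty.forall_iff, and_true,
    mul_eq_mul_right_iff, OfNat.ofNat_eq_ofNat, Nat.reduceEqDiff, false_or] at hw
  casesm* _ ∧ _
  rw [smul_A1_add_smul_A2_add_smul_A3]
  ext i k
  fin_cases i <;> fin_cases k <;> simp <;> linarith

/-- The eigenspace of `Y` for the eigenvalue `7` is spanned by `A₁, A₂, A₃`. -/
theorem stmt10 :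
    Module.End.eigenspace Yop 7
      = Submodule.span ℝ ({A1, A2, A3} : Set (Matrix (Fin 5) (Fin 5) ℝ)) := by
  ext w
  rw [Module.End.mem_eigenspace_iff, Submodule.mem_span_triple]
  constructor
  · exact fun hw => ⟨_, _, _, (eq_of_Yop_eq_smul hw).symm⟩
  · rintro ⟨a, b, c, rfl⟩
    exact Yop_smul_A1_add_smul_A2_add_smul_A3 a b c
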